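/- Let u ∈ [(3-√5)/2, 1], and let p, q be i.i.d. [0,1]-valued random variables with E[p] ≤ u. Then E[H(p + q - pq)] ≥ (1-u)·(2/(√5-1))·E[H(p)]. -/

import Mathlib

/-!
Write `H` for the binary entropy and, for `s > 0` and `x = exp (-s)`, let `F s = H x / x`.
`F` is concave, since `F'' ≤ 0` amounts to `-log (1 - x) ≤ x / (1 - x)`, and it satisfies the
doubling bound `φ F s ≤ F (2 s)`. Together, `F (s + t) ≥ φ F ((s + t) / 2) ≥ φ (F s + F t) / 2`,
which for `y = exp (-t)`, after multiplying by `x y`, reads `H (x y) ≥ φ / 2 (x H y + y H x)`.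
Substituting `1 - p`, `1 - q` for `x`, `y` and taking expectations, independence and identical
distribution turn the right-hand side into `φ (1 - E p) E H(p) ≥ φ (1 - u) E H(p)`.

The doubling bound is tight: `R s = F (2 s) - φ F s` vanishes at `0` and has a double zero at
`log φ`, where `x ^ 2 = 1 - x`. Its second derivative has the sign of an explicit function `V x`
which changes sign only once on `(0, 1)`, because `V 0 = V' 0 = 0` and `V''` has the sign of a
quartic `K` decreasing on `[0, 1]`. So `R` rises, falls to its double zero, and rises again.
-/

open Real Set MeasureTheory ProbabilityTheory

noncomputable def binEnt (p : ℝ) : ℝ := -p * Real.log p - (1 - p) * Real.log (1 - p)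

open scoped goldenRatio

section SignChanges

variable {f f' f'' : ℝ → ℝ} {D : Set ℝ}

theorem monotoneOn_of_hasDerivAt_of_nonneg (hD : Convex ℝ D)
    (hf : ∀ x ∈ D, HasDerivAt f (f' x) x) (hf' : ∀ x ∈ interior D, 0 ≤ f' x) :
    MonotoneOn f D :=
  monotoneOn_of_hasDerivWithinAt_nonneg hD
    (fun x hx => (hf x hx).continuousAt.continuousWithinAt)
    (fun x hx => (hf x (interior_subset hx)).hasDerivWithinAt) hf'

theorem antitoneOn_of_hasDerivAt_of_nonpos (hD : Convex ℝ D)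
    (hf : ∀ x ∈ D, HasDerivAt f (f' x) x) (hf' : ∀ x ∈ interior D, f' x ≤ 0) :
    AntitoneOn f D :=
  antitoneOn_of_hasDerivWithinAt_nonpos hD
    (fun x hx => (hf x hx).continuousAt.continuousWithinAt)
    (fun x hx => (hf x (interior_subset hx)).hasDerivWithinAt) hf'

def ChangesSignAt (f : ℝ → ℝ) (c e : ℝ) : Prop :=
  (∀ x ∈ Ioc 0 c, 0 ≤ f x) ∧ ∀ x ∈ Ico c e, f x ≤ 0

theorem ChangesSignAt.lt_of_pos {c e x : ℝ} (hf : ChangesSignAt f c e) (hx : x < e)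
    (hfx : 0 < f x) : x < c := by
  by_contra! h
  exact (hf.2 x ⟨h, hx⟩).not_gt hfx

theorem ChangesSignAt.of_deriv {a e z : ℝ} (ha : 0 ≤ a) (hz : z ∈ Ico 0 e)
    (hf : ∀ x ∈ Ico 0 e, HasDerivAt f (f' x) x) (hf' : ChangesSignAt f' a e)
    (h0 : f 0 = 0) (hfz : f z < 0) :
    ∃ c ∈ Icc a z, ChangesSignAt f c e := by
  have haz : a < z := by
    by_contra! hza
    have hmono : MonotoneOn f (Icc 0 z) :=
      monotoneOn_of_hasDerivAt_of_nonneg (convex_Icc 0 z)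
        (fun x hx => hf x ⟨hx.1, hx.2.trans_lt hz.2⟩)
        (fun x hx => hf'.1 x (by rw [interior_Icc] at hx; exact ⟨hx.1, hx.2.le.trans hza⟩))
    linarith [hmono ⟨le_rfl, hz.1⟩ ⟨hz.1, le_rfl⟩ hz.1]
  have hmono : MonotoneOn f (Icc 0 a) :=
    monotoneOn_of_hasDerivAt_of_nonneg (convex_Icc 0 a)
      (fun x hx => hf x ⟨hx.1, by linarith [hx.2, hz.2]⟩)
      (fun x hx => hf'.1 x (by rw [interior_Icc] at hx; exact ⟨hx.1, hx.2.le⟩))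
  have hanti : AntitoneOn f (Ico a e) :=
    antitoneOn_of_hasDerivAt_of_nonpos (convex_Ico a e)
      (fun x hx => hf x ⟨ha.trans hx.1, hx.2⟩)
      (fun x hx => hf'.2 x (by rw [interior_Ico] at hx; exact ⟨hx.1.le, hx.2⟩))
  have hfa : 0 ≤ f a := h0 ▸ hmono ⟨le_rfl, ha⟩ ⟨ha, le_rfl⟩ ha
  obtain ⟨c, hc, hfc⟩ := intermediate_value_Icc' haz.le
    (fun x hx => (hf x ⟨ha.trans hx.1, hx.2.trans_lt hz.2⟩).continuousAt.continuousWithinAt)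
    ⟨hfz.le, hfa⟩
  have hce : c < e := hc.2.trans_lt hz.2
  refine ⟨c, hc, fun x hx => ?_, fun x hx => ?_⟩
  · rcases le_total x a with hxa | hax
    · exact h0 ▸ hmono ⟨le_rfl, ha⟩ ⟨hx.1.le, hxa⟩ hx.1.le
    · exact hfc ▸ hanti ⟨hax, hx.2.trans_lt hce⟩ ⟨hc.1, hce⟩ hx.2
  · exact hfc ▸ hanti ⟨hc.1, hce⟩ ⟨hc.1.trans hx.1, hx.2⟩ hx.1


theorem nonneg_of_deriv_zero_of_monotoneOn {s₁ s₀ s : ℝ} (hs₁ : 0 < s₁) (hs₁₀ : s₁ ≤ s₀)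
    (hf' : ∀ x, 0 < x → HasDerivAt f (f' x) x) (hmono : MonotoneOn f' (Ici s₁))
    (hfs₀ : f s₀ = 0) (hf's₀ : f' s₀ = 0) (hs : s₁ ≤ s) : 0 ≤ f s := by
  have hderiv : ∀ x ∈ Ici s₁, HasDerivAt f (f' x) x := fun x hx => hf' x (hs₁.trans_le hx)
  rcases le_total s s₀ with hss₀ | hs₀s
  · have hanti : AntitoneOn f (Icc s₁ s₀) :=
      antitoneOn_of_hasDerivAt_of_nonpos (convex_Icc s₁ s₀) (fun x hx => hderiv x hx.1)
        fun x hx => by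
          rw [interior_Icc] at hx
          exact hf's₀ ▸ hmono hx.1.le hs₁₀ hx.2.le
    exact hfs₀ ▸ hanti ⟨hs, hss₀⟩ ⟨hs₁₀, le_rfl⟩ hss₀
  · have hmono' : MonotoneOn f (Ici s₀) :=
      monotoneOn_of_hasDerivAt_of_nonneg (convex_Ici s₀) (fun x hx => hderiv x (hs₁₀.trans hx))
        fun x hx => by
          rw [interior_Ici] at hx
          exact hf's₀ ▸ hmono hs₁₀ (hs₁₀.trans hx.le) hx.le
    exact hfs₀ ▸ hmono' (mem_Ici.2 le_rfl) hs₀s hs₀s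

theorem nonneg_of_deriv2_changesSign {s₁ s₀ s : ℝ} (hs₁ : 0 < s₁) (hs₁₀ : s₁ ≤ s₀)
    (hf : ContinuousOn f (Ici 0)) (hf' : ∀ x, 0 < x → HasDerivAt f (f' x) x)
    (hf'' : ∀ x, 0 < x → HasDerivAt f' (f'' x) x)
    (hneg : ∀ x ∈ Ioc 0 s₁, f'' x ≤ 0) (hpos : ∀ x, s₁ ≤ x → 0 ≤ f'' x)
    (h0 : f 0 = 0) (hfs₀ : f s₀ = 0) (hf's₀ : f' s₀ = 0) (hs : 0 ≤ s) : 0 ≤ f s := by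
  have hmono : MonotoneOn f' (Ici s₁) :=
    monotoneOn_of_hasDerivAt_of_nonneg (convex_Ici s₁) (fun x hx => hf'' x (hs₁.trans_le hx))
      fun x hx => hpos x (interior_subset hx)
  have hright : ∀ x, s₁ ≤ x → 0 ≤ f x := fun x hx =>
    nonneg_of_deriv_zero_of_monotoneOn hs₁ hs₁₀ hf' hmono hfs₀ hf's₀ hx
  have hanti : AntitoneOn f' (Ioc 0 s₁) :=
    antitoneOn_of_hasDerivAt_of_nonpos (convex_Ioc 0 s₁) (fun x hx => hf'' x hx.1)
      fun x hx => hneg x (interior_subset hx)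
  rcases le_total s₁ s with hs₁s | hss₁
  · exact hright s hs₁s
  rcases hs.eq_or_lt with rfl | hs
  · exact h0.ge
  rcases le_total (f' s) 0 with hf's | hf's
  · have hanti' : AntitoneOn f (Icc s s₁) :=
      antitoneOn_of_hasDerivAt_of_nonpos (convex_Icc s s₁) (fun x hx => hf' x (hs.trans_le hx.1))
        fun x hx => by
          rw [interior_Icc] at hx
          exact (hanti ⟨hs, hss₁⟩ ⟨hs.trans hx.1, hx.2.le⟩ hx.1.le).trans hf's
    exact (hright s₁ le_rfl).trans (hanti' ⟨le_rfl, hss₁⟩ ⟨hss₁, le_rfl⟩ hss₁)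
  · have hmono' : MonotoneOn f (Icc 0 s) :=
      monotoneOn_of_hasDerivWithinAt_nonneg (convex_Icc 0 s) (hf.mono Icc_subset_Ici_self)
        (fun x hx => by
          rw [interior_Icc] at hx ⊢
          exact (hf' x hx.1).hasDerivWithinAt)
        fun x hx => by
          rw [interior_Icc] at hx
          exact hf's.trans (hanti ⟨hx.1, hx.2.le.trans hss₁⟩ ⟨hs, hss₁⟩ hx.2.le)
    exact h0 ▸ hmono' ⟨le_rfl, hs.le⟩ ⟨hs.le, le_rfl⟩ hs.le

end SignChanges

theorem goldenRatio_gt_1618 : 1.618 < φ := by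
  rw [goldenRatio]
  nlinarith [sq_sqrt (show (0:ℝ) ≤ 5 by norm_num), sqrt_nonneg 5]

theorem goldenRatio_lt_161804 : φ < 1.61804 := by
  rw [goldenRatio]
  nlinarith [sq_sqrt (show (0:ℝ) ≤ 5 by norm_num), sqrt_nonneg 5]

theorem inv_goldenRatio_eq_sub_one : φ⁻¹ = φ - 1 := by
  rw [inv_goldenRatio, ← one_sub_goldenConj]; ring

theorem log_goldenRatio_gt : 3 / 7 < log φ := by
  have h7 : φ ^ 7 = 13 * φ + 8 := by
    linear_combination (φ ^ 5 + φ ^ 4 + 2 * φ ^ 3 + 3 * φ ^ 2 + 5 * φ + 8) * goldenRatio_sq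
  have he : exp (3 / 7) ^ 7 < φ ^ 7 := by
    rw [← exp_nat_mul, show ((7 : ℕ) : ℝ) * (3 / 7) = 1 + 1 + 1 by norm_num, exp_add, exp_add, h7]
    nlinarith [exp_one_lt_d9, exp_pos 1, goldenRatio_gt_1618]
  rw [lt_log_iff_exp_lt goldenRatio_pos]
  exact lt_of_pow_lt_pow_left₀ 7 goldenRatio_pos.le he

namespace EntropyDoubling

noncomputable def K (x : ℝ) : ℝ := 3 * φ + (8 * φ - 24) * x + 6 * φ * x ^ 2 - 8 * x ^ 3 - φ * x ^ 4

noncomputable def V' (x : ℝ) : ℝ :=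
  φ * log (1 - x) + (4 - φ * x) / (1 - x) + (-φ * x ^ 2 + 2 * φ * x - 2) / (1 - x) ^ 2
    - 4 / (1 + x) + 2 / (1 + x) ^ 2

-- `V x / x ^ 2` is `R''` at `s = -log x` (`four_mul_F''_two_mul_sub`).
noncomputable def V (x : ℝ) : ℝ :=
  (4 - φ * x) * -log (1 - x) - 4 * log (1 + x) + x ^ 2 * (φ * (1 + x) - 4) / (1 - x ^ 2)

theorem hasDerivAt_K (x : ℝ) :
    HasDerivAt K ((8 * φ - 24) + 12 * φ * x - 24 * x ^ 2 - 4 * φ * x ^ 3) x := by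
  unfold K
  exact (((((hasDerivAt_const x (3 * φ)).add ((hasDerivAt_id' x).const_mul (8 * φ - 24))).add
    ((hasDerivAt_pow 2 x).const_mul (6 * φ))).sub ((hasDerivAt_pow 3 x).const_mul 8)).sub
    ((hasDerivAt_pow 4 x).const_mul φ)).congr_deriv (by norm_num; ring)

theorem exists_changesSignAt_K : ∃ a ∈ Icc (0 : ℝ) 1, ChangesSignAt K a 1 := by
  have hanti : AntitoneOn K (Icc 0 1) :=
    antitoneOn_of_hasDerivAt_of_nonpos (convex_Icc 0 1) (fun x _ => hasDerivAt_K x)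
      fun x hx => by
        rw [interior_Icc] at hx
        nlinarith [sq_nonneg (x - φ / 4), goldenRatio_sq, goldenRatio_lt_two,
          mul_pos goldenRatio_pos (pow_pos hx.1 3)]
  have hK0 : 0 ≤ K 0 := by simp only [K]; nlinarith [goldenRatio_pos]
  have hK1 : K 1 ≤ 0 := by simp only [K]; nlinarith [goldenRatio_lt_two]
  obtain ⟨a, ha, hKa⟩ := intermediate_value_Icc' zero_le_one
    (fun x _ => (hasDerivAt_K x).continuousAt.continuousWithinAt) ⟨hK1, hK0⟩
  refine ⟨a, ha, fun x hx => ?_, fun x hx => ?_⟩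
  · exact hKa ▸ hanti ⟨hx.1.le, hx.2.trans ha.2⟩ ha hx.2
  · exact hKa ▸ hanti ha ⟨ha.1.trans hx.1, hx.2.le⟩ hx.1

theorem hasDerivAt_log_one_sub {x : ℝ} (hx : x ≠ 1) :
    HasDerivAt (fun x => log (1 - x)) (-(1 - x)⁻¹) x := by
  simpa [Function.comp_def] using
    (hasDerivAt_log (sub_ne_zero.2 hx.symm)).comp x ((hasDerivAt_id' x).const_sub 1)

theorem hasDerivAt_V' {x : ℝ} (h0 : -1 < x) (h1 : x < 1) :
    HasDerivAt V' (x * K x / ((1 - x) ^ 3 * (1 + x) ^ 3)) x := by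
  have hm : 1 - x ≠ 0 := by linarith
  have hp : 1 + x ≠ 0 := by linarith
  have hden1 : HasDerivAt (fun x : ℝ => 1 - x) (-1) x := by
    simpa using (hasDerivAt_id' x).const_sub 1
  have hden3 : HasDerivAt (fun x : ℝ => 1 + x) 1 x := (hasDerivAt_id' x).const_add 1
  have ht2 := ((hasDerivAt_id' x).const_mul φ |>.const_sub 4).div hden1 hm
  have ht3 := ((((hasDerivAt_pow 2 x).const_mul (-φ)).add
    ((hasDerivAt_id' x).const_mul (2 * φ))).sub_const 2).div (hden1.pow 2) (pow_ne_zero 2 hm)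
  have ht4 := (hasDerivAt_const x (4 : ℝ)).div hden3 hp
  have ht5 := (hasDerivAt_const x (2 : ℝ)).div (hden3.pow 2) (pow_ne_zero 2 hp)
  unfold V' K
  refine (((((hasDerivAt_log_one_sub h1.ne).const_mul φ).add ht2).add ht3).sub ht4 |>.add ht5)
    |>.congr_deriv ?_
  simp only [Pi.add_apply, Pi.pow_apply]
  field_simp
  ring

theorem hasDerivAt_V {x : ℝ} (h0 : -1 < x) (h1 : x < 1) : HasDerivAt V (V' x) x := by
  have hm : 1 - x ≠ 0 := by linarith
  have hp : 1 + x ≠ 0 := by linarith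
  have hmp : 1 - x ^ 2 ≠ 0 := by
    rw [show 1 - x ^ 2 = (1 - x) * (1 + x) by ring]; exact mul_ne_zero hm hp
  have hlog2 : HasDerivAt (fun x => log (1 + x)) (1 + x)⁻¹ x := by
    simpa [Function.comp_def] using (hasDerivAt_log hp).comp x ((hasDerivAt_id' x).const_add 1)
  have ht1 := ((hasDerivAt_id' x).const_mul φ |>.const_sub 4).mul (hasDerivAt_log_one_sub h1.ne).neg
  have ht4 := ((hasDerivAt_pow 2 x).mul (((hasDerivAt_id' x).const_add 1).const_mul φ
    |>.sub_const 4)).div ((hasDerivAt_pow 2 x).const_sub 1) hmp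
  unfold V V'
  refine ((ht1.sub (hlog2.const_mul 4)).add ht4).congr_deriv ?_
  simp only [Pi.mul_apply, Pi.neg_apply]
  field_simp
  ring

theorem V'_zero : V' 0 = 0 := by norm_num [V']

theorem V_zero : V 0 = 0 := by norm_num [V]

theorem V'_three_quarters_neg : V' (3 / 4) < 0 := by
  rw [V', show (1 : ℝ) - 3 / 4 = (2 ^ 2)⁻¹ by norm_num, log_inv, log_pow]
  norm_num
  nlinarith [log_two_gt_d9, goldenRatio_gt_1618, goldenRatio_lt_161804]

theorem V_seven_eighths_neg : V (7 / 8) < 0 := by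
  have hlog15 : log 2 - 1 / 15 ≤ log (1 + 7 / 8) := by
    rw [show (1 : ℝ) + 7 / 8 = 2 / (16 / 15) by norm_num, log_div (by norm_num) (by norm_num)]
    linarith [log_le_sub_one_of_pos (show (0 : ℝ) < 16 / 15 by norm_num)]
  rw [V, show (1 : ℝ) - 7 / 8 = (2 ^ 3)⁻¹ by norm_num, log_inv, log_pow]
  norm_num at hlog15 ⊢
  nlinarith [log_two_lt_d9, log_two_gt_d9, goldenRatio_gt_1618, goldenRatio_lt_161804]

theorem V_inv_goldenRatio_pos : 0 < V φ⁻¹ := by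
  have h1 : 1 - φ⁻¹ = φ⁻¹ ^ 2 := by
    rw [inv_goldenRatio_eq_sub_one]; linear_combination -goldenRatio_sq
  have h2 : 1 + φ⁻¹ = φ := by rw [inv_goldenRatio_eq_sub_one]; ring
  have h3 : 1 - φ⁻¹ ^ 2 = φ⁻¹ := by linear_combination h1
  have h4 : φ⁻¹ ^ 2 * (φ * φ - 4) / φ⁻¹ = (φ - 1) * (φ - 3) := by
    rw [sq, mul_assoc, mul_div_cancel_left₀ _ (inv_ne_zero goldenRatio_ne_zero),
      inv_goldenRatio_eq_sub_one]
    linear_combination (φ - 1) * goldenRatio_sq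
  rw [V, h1, h2, h3, log_pow, log_inv, mul_inv_cancel₀ goldenRatio_ne_zero, h4]
  push_cast
  nlinarith [log_goldenRatio_gt, goldenRatio_lt_161804, goldenRatio_sq]

theorem exists_changesSignAt_V : ∃ c, φ⁻¹ < c ∧ c < 1 ∧ ChangesSignAt V c 1 := by
  obtain ⟨a, ha, hK⟩ := exists_changesSignAt_K
  have hV'' : ChangesSignAt (fun x => x * K x / ((1 - x) ^ 3 * (1 + x) ^ 3)) a 1 := by
    refine ⟨fun x hx => ?_, fun x hx => ?_⟩
    · have hx1 : x ≤ 1 := hx.2.trans ha.2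
      exact div_nonneg (mul_nonneg hx.1.le (hK.1 x hx))
        (mul_nonneg (pow_nonneg (by linarith) 3) (pow_nonneg (by linarith [hx.1]) 3))
    · have hx0 : 0 ≤ x := ha.1.trans hx.1
      exact div_nonpos_of_nonpos_of_nonneg (mul_nonpos_of_nonneg_of_nonpos hx0 (hK.2 x hx))
        (mul_nonneg (pow_nonneg (by linarith [hx.2]) 3) (pow_nonneg (by linarith) 3))
  obtain ⟨b, hb, hV'⟩ := hV''.of_deriv ha.1 (z := 3 / 4) ⟨by norm_num, by norm_num⟩
    (fun x hx => hasDerivAt_V' (by linarith [hx.1]) hx.2) V'_zero V'_three_quarters_neg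
  obtain ⟨c, hc, hV⟩ := hV'.of_deriv (ha.1.trans hb.1) (z := 7 / 8) ⟨by norm_num, by norm_num⟩
    (fun x hx => hasDerivAt_V (by linarith [hx.1]) hx.2) V_zero V_seven_eighths_neg
  refine ⟨c, ChangesSignAt.lt_of_pos hV ?_ V_inv_goldenRatio_pos, by linarith [hc.2], hV⟩
  exact inv_lt_one_of_one_lt₀ one_lt_goldenRatio

noncomputable def F (s : ℝ) : ℝ := exp s * binEntropy (exp (-s))

noncomputable def F' (s : ℝ) : ℝ := -(exp s * log (1 - exp (-s)))

noncomputable def F'' (s : ℝ) : ℝ := F' s - (1 - exp (-s))⁻¹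

noncomputable def R (s : ℝ) : ℝ := F (2 * s) - φ * F s

noncomputable def R' (s : ℝ) : ℝ := 2 * F' (2 * s) - φ * F' s

theorem F_neg_log {x : ℝ} (hx : 0 < x) : F (-log x) = binEntropy x / x := by
  rw [F, neg_neg, exp_log hx, exp_neg, exp_log hx, div_eq_inv_mul]

theorem F'_neg_log {x : ℝ} (hx : 0 < x) : F' (-log x) = -log (1 - x) / x := by
  rw [F', neg_neg, exp_log hx, exp_neg, exp_log hx, div_eq_inv_mul, mul_neg]

theorem exp_neg_lt_one {s : ℝ} (hs : 0 < s) : exp (-s) < 1 := exp_lt_one_iff.2 (by linarith)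

theorem hasDerivAt_exp_neg (s : ℝ) : HasDerivAt (fun s => exp (-s)) (-exp (-s)) s := by
  simpa using (hasDerivAt_neg s).exp

theorem hasDerivAt_F {s : ℝ} (hs : 0 < s) : HasDerivAt F (F' s) s := by
  have hH := (hasDerivAt_binEntropy (exp_pos (-s)).ne' (exp_neg_lt_one hs).ne).comp s
    (hasDerivAt_exp_neg s)
  refine ((hasDerivAt_exp s).mul hH).congr_deriv ?_
  simp only [F', Function.comp_apply, binEntropy, log_inv, log_exp]
  ring

theorem hasDerivAt_F' {s : ℝ} (hs : 0 < s) : HasDerivAt F' (F'' s) s := by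
  have hx : 1 - exp (-s) ≠ 0 := (sub_pos.2 (exp_neg_lt_one hs)).ne'
  have hlog := (hasDerivAt_log hx).comp s ((hasDerivAt_exp_neg s).const_sub 1)
  refine ((hasDerivAt_exp s).mul hlog).neg.congr_deriv ?_
  have hxe : exp (-s) * exp s = 1 := by rw [← exp_add]; simp
  simp only [F'', F', Function.comp_apply]
  field_simp
  linear_combination -hxe

theorem F''_nonpos {s : ℝ} (hs : 0 < s) : F'' s ≤ 0 := by
  have hx : 0 < exp (-s) := exp_pos _
  have hx1 : 0 < 1 - exp (-s) := sub_pos.2 (exp_neg_lt_one hs)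
  have hlog := log_le_sub_one_of_pos (inv_pos.2 hx1)
  rw [log_inv] at hlog
  rw [F'', F', sub_nonpos, show exp s = (exp (-s))⁻¹ by rw [exp_neg, inv_inv]]
  rw [← div_eq_inv_mul, ← neg_div, div_le_iff₀ hx]
  calc -log (1 - exp (-s)) ≤ (1 - exp (-s))⁻¹ - 1 := hlog
    _ = (1 - exp (-s))⁻¹ * exp (-s) := by field_simp; ring

theorem concaveOn_F : ConcaveOn ℝ (Ioi 0) F := by
  refine concaveOn_of_hasDerivWithinAt2_nonpos (f' := F') (f'' := F'') (convex_Ioi 0)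
    (fun s hs => (hasDerivAt_F hs).continuousAt.continuousWithinAt) ?_ ?_ ?_ <;>
    rw [interior_Ioi]
  · exact fun s hs => (hasDerivAt_F hs).hasDerivWithinAt
  · exact fun s hs => (hasDerivAt_F' hs).hasDerivWithinAt
  · exact fun s hs => F''_nonpos hs

theorem hasDerivAt_R {s : ℝ} (hs : 0 < s) : HasDerivAt R (R' s) s := by
  have h2 := (hasDerivAt_F (by positivity : 0 < 2 * s)).comp s ((hasDerivAt_id' s).const_mul 2)
  exact (h2.sub ((hasDerivAt_F hs).const_mul φ)).congr_deriv (by rw [R']; ring)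

theorem four_mul_F''_two_mul_sub {s : ℝ} (hs : 0 < s) :
    4 * F'' (2 * s) - φ * F'' s = V (exp (-s)) / exp (-s) ^ 2 := by
  set x := exp (-s) with hxdef
  have hx0 : 0 < x := exp_pos _
  have hx1 : x < 1 := exp_neg_lt_one hs
  have hx2 : exp (-(2 * s)) = x ^ 2 := by rw [hxdef, ← exp_nat_mul]; ring_nf
  have hE1 : exp s = x⁻¹ := by rw [hxdef, exp_neg, inv_inv]
  have hE2 : exp (2 * s) = (x ^ 2)⁻¹ := by rw [← hx2, exp_neg, inv_inv]
  have hm : 1 - x ≠ 0 := by linarith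
  have hp : 1 + x ≠ 0 := by linarith
  have hmp : 1 - x ^ 2 ≠ 0 := by nlinarith
  have hsplit : log (1 - x ^ 2) = log (1 - x) + log (1 + x) := by
    rw [← log_mul hm hp]; ring_nf
  simp only [F'', F', V]
  rw [hx2, hE1, hE2, hsplit, ← hxdef]
  field_simp
  ring

theorem hasDerivAt_R' {s : ℝ} (hs : 0 < s) :
    HasDerivAt R' (V (exp (-s)) / exp (-s) ^ 2) s := by
  have h2 := (hasDerivAt_F' (by positivity : 0 < 2 * s)).comp s ((hasDerivAt_id' s).const_mul 2)
  refine ((h2.const_mul 2).sub ((hasDerivAt_F' hs).const_mul φ)).congr_deriv ?_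
  rw [← four_mul_F''_two_mul_sub hs]
  ring

theorem continuous_R : Continuous R := by
  unfold R F
  fun_prop

theorem R_zero : R 0 = 0 := by simp [R, F]

theorem R_log_goldenRatio : R (log φ) = 0 := by
  have h : φ⁻¹ ^ 2 = 1 - φ⁻¹ := by
    rw [inv_goldenRatio_eq_sub_one]; linear_combination goldenRatio_sq
  have hH : binEntropy (φ⁻¹ ^ 2) = binEntropy φ⁻¹ := by rw [h, binEntropy_one_sub]
  rw [R, ← neg_neg (log φ), ← log_inv, show 2 * -log φ⁻¹ = -log (φ⁻¹ ^ 2) by rw [log_pow]; ring,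
    F_neg_log (by positivity), F_neg_log (by positivity), hH]
  simp only [div_eq_mul_inv, ← inv_pow, inv_inv]
  ring

theorem R'_log_goldenRatio : R' (log φ) = 0 := by
  have h1 : 1 - φ⁻¹ ^ 2 = φ⁻¹ := by
    rw [inv_goldenRatio_eq_sub_one]; linear_combination -goldenRatio_sq
  have h2 : 1 - φ⁻¹ = φ⁻¹ ^ 2 := by linear_combination h1
  rw [R', ← neg_neg (log φ), ← log_inv, show 2 * -log φ⁻¹ = -log (φ⁻¹ ^ 2) by rw [log_pow]; ring,
    F'_neg_log (by positivity), F'_neg_log (by positivity), h1, h2, log_pow]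
  simp only [div_eq_mul_inv, ← inv_pow, inv_inv]
  ring

theorem R_nonneg {s : ℝ} (hs : 0 ≤ s) : 0 ≤ R s := by
  obtain ⟨c, hc, hc1, hV⟩ := exists_changesSignAt_V
  have hc0 : 0 < c := (inv_pos.2 goldenRatio_pos).trans hc
  refine nonneg_of_deriv2_changesSign (s₁ := -log c) (f' := R')
    (f'' := fun s => V (exp (-s)) / exp (-s) ^ 2) (neg_pos.2 (log_neg hc0 hc1)) ?_
    continuous_R.continuousOn (fun x hx => hasDerivAt_R hx) (fun x hx => hasDerivAt_R' hx)
    (fun x hx => ?_) (fun x hx => ?_) R_zero R_log_goldenRatio R'_log_goldenRatio hs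
  · rw [neg_le, ← log_inv]
    exact log_le_log (by positivity) hc.le
  · have hcx : c ≤ exp (-x) := by
      rw [← exp_log hc0]; exact exp_le_exp.2 (by linarith [hx.2])
    exact div_nonpos_of_nonpos_of_nonneg (hV.2 _ ⟨hcx, exp_neg_lt_one hx.1⟩) (sq_nonneg _)
  · have hxc : exp (-x) ≤ c := by
      rw [← exp_log hc0]; exact exp_le_exp.2 (by linarith)
    exact div_nonneg (hV.1 _ ⟨exp_pos _, hxc⟩) (sq_nonneg _)

theorem goldenRatio_mul_midpoint_le_F_add {s t : ℝ} (hs : 0 < s) (ht : 0 < t) :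
    φ * ((F s + F t) / 2) ≤ F (s + t) := by
  have hmid := concaveOn_F.2 hs ht (by norm_num : (0 : ℝ) ≤ 1 / 2) (by norm_num : (0 : ℝ) ≤ 1 / 2)
    (by norm_num)
  have hR := R_nonneg (by positivity : 0 ≤ (s + t) / 2)
  rw [R, mul_div_cancel₀ _ two_ne_zero] at hR
  simp only [smul_eq_mul] at hmid
  rw [show 1 / 2 * s + 1 / 2 * t = (s + t) / 2 by ring] at hmid
  nlinarith [goldenRatio_pos]

end EntropyDoubling

open EntropyDoubling in
theorem goldenRatio_div_two_mul_le_binEntropy_mul {x y : ℝ} (hx : x ∈ Icc 0 1)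
    (hy : y ∈ Icc 0 1) : φ / 2 * (x * binEntropy y + y * binEntropy x) ≤ binEntropy (x * y) := by
  have hHx := binEntropy_nonneg hx.1 hx.2
  have hHy := binEntropy_nonneg hy.1 hy.2
  rcases hx.1.eq_or_lt with rfl | hx0
  · simp
  rcases hy.1.eq_or_lt with rfl | hy0
  · simp
  rcases hx.2.eq_or_lt with rfl | hx1
  · simp only [one_mul, binEntropy_one, mul_zero, add_zero]
    nlinarith [goldenRatio_lt_two]
  rcases hy.2.eq_or_lt with rfl | hy1
  · simp only [mul_one, binEntropy_one, mul_zero, zero_add]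
    nlinarith [goldenRatio_lt_two]
  have h := goldenRatio_mul_midpoint_le_F_add (neg_pos.2 (log_neg hx0 hx1))
    (neg_pos.2 (log_neg hy0 hy1))
  rw [← neg_add, ← log_mul hx0.ne' hy0.ne', F_neg_log hx0, F_neg_log hy0,
    F_neg_log (mul_pos hx0 hy0), le_div_iff₀ (mul_pos hx0 hy0)] at h
  calc φ / 2 * (x * binEntropy y + y * binEntropy x)
      = φ * ((binEntropy x / x + binEntropy y / y) / 2) * (x * y) := by field_simp; ring
    _ ≤ binEntropy (x * y) := h

theorem goldenRatio_div_two_mul_le_binEntropy_add_sub_mul {x y : ℝ} (hx : x ∈ Icc 0 1)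
    (hy : y ∈ Icc 0 1) :
    φ / 2 * ((1 - x) * binEntropy y + (1 - y) * binEntropy x) ≤ binEntropy (x + y - x * y) := by
  have h := goldenRatio_div_two_mul_le_binEntropy_mul (Icc.mem_iff_one_sub_mem.1 hx)
    (Icc.mem_iff_one_sub_mem.1 hy)
  rwa [binEntropy_one_sub, binEntropy_one_sub, ← binEntropy_one_sub ((1 - x) * (1 - y)),
    show 1 - (1 - x) * (1 - y) = x + y - x * y by ring] at h

theorem binEntropy_mem_Icc {x : ℝ} (hx : x ∈ Icc 0 1) : binEntropy x ∈ Icc 0 1 :=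
  ⟨binEntropy_nonneg hx.1 hx.2, binEntropy_le_log_two.trans (by linarith [log_two_lt_d9])⟩

theorem one_sub_mul_binEntropy_mem_Icc {x y : ℝ} (hx : x ∈ Icc 0 1) (hy : y ∈ Icc 0 1) :
    (1 - x) * binEntropy y ∈ Icc 0 1 :=
  unitInterval.mul_mem (Icc.mem_iff_one_sub_mem.1 hx) (binEntropy_mem_Icc hy)

theorem binEntropy_add_sub_mul_mem_Icc {x y : ℝ} (hx : x ∈ Icc 0 1) (hy : y ∈ Icc 0 1) :
    binEntropy (x + y - x * y) ∈ Icc 0 1 := by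
  refine binEntropy_mem_Icc (Icc.mem_iff_one_sub_mem.2 ?_)
  rw [show 1 - (x + y - x * y) = (1 - x) * (1 - y) by ring]
  exact unitInterval.mul_mem (Icc.mem_iff_one_sub_mem.1 hx) (Icc.mem_iff_one_sub_mem.1 hy)

theorem ProbabilityTheory.IndepFun.integral_comp_mul_comp_of_identDistrib {Ω α : Type*}
    [MeasurableSpace Ω] [MeasurableSpace α] {μ : Measure Ω} {X Y : Ω → α}
    (hXY : IndepFun X Y μ) (hid : IdentDistrib X Y μ μ) {f g : α → ℝ} (hf : Measurable f)
    (hg : Measurable g) :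
    ∫ ω, f (X ω) * g (Y ω) ∂μ = (∫ ω, f (X ω) ∂μ) * ∫ ω, g (X ω) ∂μ := by
  refine ((hXY.comp hf hg).integral_fun_mul_eq_mul_integral
    (hf.comp_aemeasurable hid.aemeasurable_fst).aestronglyMeasurable
    (hg.comp_aemeasurable hid.aemeasurable_snd).aestronglyMeasurable).trans ?_
  exact congrArg _ (hid.comp hg).integral_eq.symm

section IdentDistrib

variable {Ω : Type*} [MeasurableSpace Ω] {μ : Measure Ω} [IsProbabilityMeasure μ] {p q : Ω → ℝ}

theorem integrable_one_sub_mul_binEntropy (hp : Measurable p) (hq : Measurable q)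
    (hp01 : ∀ᵐ ω ∂μ, p ω ∈ Icc 0 1) (hq01 : ∀ᵐ ω ∂μ, q ω ∈ Icc 0 1) :
    Integrable (fun ω => (1 - p ω) * binEntropy (q ω)) μ :=
  .of_mem_Icc 0 1 (by fun_prop) <| by
    filter_upwards [hp01, hq01] with ω using one_sub_mul_binEntropy_mem_Icc

theorem integrable_binEntropy_add_sub_mul (hp : Measurable p) (hq : Measurable q)
    (hp01 : ∀ᵐ ω ∂μ, p ω ∈ Icc 0 1) (hq01 : ∀ᵐ ω ∂μ, q ω ∈ Icc 0 1) :
    Integrable (fun ω => binEntropy (p ω + q ω - p ω * q ω)) μ :=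
  .of_mem_Icc 0 1 (by fun_prop) <| by
    filter_upwards [hp01, hq01] with ω using binEntropy_add_sub_mul_mem_Icc

theorem integral_one_sub_mul_binEntropy_add (hp : Measurable p) (hq : Measurable q)
    (hpq : IndepFun p q μ) (hid : IdentDistrib p q μ μ) (hp01 : ∀ ω, p ω ∈ Icc 0 1) :
    ∫ ω, ((1 - p ω) * binEntropy (q ω) + (1 - q ω) * binEntropy (p ω)) ∂μ
      = 2 * (1 - ∫ ω, p ω ∂μ) * ∫ ω, binEntropy (p ω) ∂μ := by
  have hp01' : ∀ᵐ ω ∂μ, p ω ∈ Icc 0 1 := ae_of_all _ hp01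
  have hq01 := hid.ae_mem_snd measurableSet_Icc hp01'
  have hH := binEntropy_continuous.measurable
  have hpq' : ∫ ω, (1 - q ω) * binEntropy (p ω) ∂μ
      = (∫ ω, binEntropy (p ω) ∂μ) * ∫ ω, (1 - p ω) ∂μ := by
    simp_rw [mul_comm (1 - q _)]
    exact hpq.integral_comp_mul_comp_of_identDistrib hid hH (g := fun x => 1 - x) (by fun_prop)
  rw [integral_add (integrable_one_sub_mul_binEntropy hp hq hp01' hq01)
      (integrable_one_sub_mul_binEntropy hq hp hq01 hp01'), hpq',
    hpq.integral_comp_mul_comp_of_identDistrib hid (f := fun x => 1 - x) (by fun_prop) hH,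
    integral_sub (integrable_const 1) (.of_mem_Icc 0 1 hp.aemeasurable hp01')]
  simp
  ring

end IdentDistrib

theorem binEnt_eq_binEntropy : binEnt = binEntropy := by
  ext p
  rw [binEnt, binEntropy, log_inv, log_inv]
  ring

theorem two_div_sqrt_five_sub_one : 2 / (√5 - 1) = φ := by
  have h5 := sq_sqrt (show (0 : ℝ) ≤ 5 by norm_num)
  rw [div_eq_iff (by nlinarith [sqrt_nonneg 5]), goldenRatio]
  linear_combination -h5 / 2

theorem stmt14_general {Ω : Type*} [MeasurableSpace Ω] {μ : Measure Ω} [IsProbabilityMeasure μ]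
    (u : ℝ)
    (p q : Ω → ℝ) (hp : Measurable p) (hq : Measurable q)
    (hpq : IndepFun p q μ) (hid : IdentDistrib p q μ μ)
    (hp01 : ∀ ω, p ω ∈ Set.Icc (0:ℝ) 1)
    (hmean : ∫ ω, p ω ∂μ ≤ u) :
    ∫ ω, binEnt (p ω + q ω - p ω * q ω) ∂μ
      ≥ (1 - u) * (2 / (Real.sqrt 5 - 1)) * ∫ ω, binEnt (p ω) ∂μ := by
  have hp01' : ∀ᵐ ω ∂μ, p ω ∈ Icc 0 1 := ae_of_all _ hp01
  have hq01 := hid.ae_mem_snd measurableSet_Icc hp01'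
  rw [binEnt_eq_binEntropy, two_div_sqrt_five_sub_one, ge_iff_le]
  calc (1 - u) * φ * ∫ ω, binEntropy (p ω) ∂μ
      ≤ (1 - ∫ ω, p ω ∂μ) * φ * ∫ ω, binEntropy (p ω) ∂μ := by
        gcongr
        exact integral_nonneg fun ω => (binEntropy_mem_Icc (hp01 ω)).1
    _ = ∫ ω, φ / 2 * ((1 - p ω) * binEntropy (q ω) + (1 - q ω) * binEntropy (p ω)) ∂μ := by
        rw [integral_const_mul, integral_one_sub_mul_binEntropy_add hp hq hpq hid hp01]
        ring
    _ ≤ ∫ ω, binEntropy (p ω + q ω - p ω * q ω) ∂μ :=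
        integral_mono_ae (((integrable_one_sub_mul_binEntropy hp hq hp01' hq01).add
            (integrable_one_sub_mul_binEntropy hq hp hq01 hp01')).const_mul _)
          (integrable_binEntropy_add_sub_mul hp hq hp01' hq01)
          (hq01.mono fun ω hω => goldenRatio_div_two_mul_le_binEntropy_add_sub_mul (hp01 ω) hω)

theorem stmt14 {Ω : Type*} [MeasurableSpace Ω] {μ : Measure Ω} [IsProbabilityMeasure μ]
    (u : ℝ) (hu0 : (3 - Real.sqrt 5) / 2 ≤ u) (hu1 : u ≤ 1)
    (p q : Ω → ℝ) (hp : Measurable p) (hq : Measurable q)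
    (hpq : IndepFun p q μ) (hid : IdentDistrib p q μ μ)
    (hp01 : ∀ ω, p ω ∈ Set.Icc (0:ℝ) 1)
    (hmean : ∫ ω, p ω ∂μ ≤ u) :
    ∫ ω, binEnt (p ω + q ω - p ω * q ω) ∂μ
      ≥ (1 - u) * (2 / (Real.sqrt 5 - 1)) * ∫ ω, binEnt (p ω) ∂μ :=
  stmt14_general u p q hp hq hpq hid hp01 hmean
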